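/- Let a vector-valued CSP instance with only linear constraints be given, let ε ∈ (0, 1/400), and let π1 : F^k → F^d and π2 : F^{k·m} → F^d be functions with p3 ≥ 1 − 4ε. Suppose σ : Fin k → (Fin d → F) and σ2 : Fin k × Fin m → (Fin d → F) satisfy Δ(π1, PWH(σ)) ≤ 24ε and Δ(π2, PWH(σ2)) ≤ 24ε (where σ2 is viewed as a tuple of k·m vectors in F^d). Then σ2(p,e) = M_e · σ(p) for every p ∈ Fin k and e ∈ Fin m. -/

import Mathlib

open scoped Classical

/-- The probability that a uniformly random element of a finite type `Ω`
satisfies the predicate `P`. -/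
noncomputable def prob {Ω : Type*} [Fintype Ω] (P : Ω → Prop) : ℝ :=
  ((Finset.univ.filter P).card : ℝ) / (Fintype.card Ω : ℝ)

/-- Relative (Hamming) distance between two functions on a finite domain. -/
noncomputable def rdist {A B : Type*} [Fintype A] (f g : A → B) : ℝ :=
  prob (fun a => f a ≠ g a)

/-- The parallel Walsh–Hadamard encoding of an assignment `σ : ι → (Fin d → F)`:
`PWH σ b = ∑ i, b i • σ i`, as a function from `ι → F` to `Fin d → F`. -/
def PWH {F : Type*} [CommRing F] {ι : Type*} [Fintype ι] {d : ℕ}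
    (σ : ι → Fin d → F) : (ι → F) → (Fin d → F) :=
  fun b j => ∑ i, b i * σ i j

/-!
Suppose `σ2 (p, e) ≠ M e *ᵥ σ p` for some `(p, e)`, so that `c (p, e) := σ2 (p, e) - M e *ᵥ σ p`
is not identically zero. If the matrix test passes at a point where `π1` and `π2` agree with the
codewords `PWH σ`, `PWH σ2` at all four queried points, linearity of `PWH` turns the test equation
into `∑ λ_p μ_e c (p, e) = 0`. A nonzero bilinear form vanishes at a uniformly random `(λ, μ)` with
probability at most `2/q - 1/q² ≤ 3/4`, where `q = |F|`. Each queried point is uniformly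
distributed, so the union bound gives `1 - 4ε ≤ p3 ≤ 3/4 + 4 · 24ε`, contradicting `ε < 1/400`.
-/

open Matrix

section Prob

variable {Ω A B : Type*} [Fintype Ω] [Fintype A] [Fintype B]

lemma prob_nonneg (P : Ω → Prop) : 0 ≤ prob P := by
  unfold prob
  positivity

lemma prob_le_one (P : Ω → Prop) : prob P ≤ 1 := by
  unfold prob
  exact div_le_one_of_le₀ (by exact_mod_cast Finset.card_filter_le _ _) (by positivity)

lemma prob_mono {P Q : Ω → Prop} (h : ∀ x, P x → Q x) : prob P ≤ prob Q := by
  unfold prob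
  gcongr ?_ / _
  exact_mod_cast Finset.card_le_card (Finset.monotone_filter_right _ fun x _ => h x)

lemma prob_or_le {P Q : Ω → Prop} : prob (fun x => P x ∨ Q x) ≤ prob P + prob Q := by
  unfold prob
  rw [← add_div]
  gcongr ?_ / _
  exact_mod_cast (Finset.card_le_card fun x hx => by simpa using hx).trans
    (Finset.card_union_le _ _)

lemma prob_comp_equiv (e : Ω ≃ A) (P : A → Prop) : prob (fun x => P (e x)) = prob P := by
  unfold prob
  rw [Fintype.card_congr e, Finset.card_equiv (t := Finset.univ.filter P) e (by simp)]

lemma prob_prod_eq_sum (R : A → B → Prop) :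
    prob (fun y : A × B => R y.1 y.2) = (∑ a, prob (R a)) / Fintype.card A := by
  simp only [prob, Finset.natCast_card_filter, Fintype.card_prod, ← Finset.sum_div,
    Fintype.sum_prod_type, Nat.cast_mul, div_div, mul_comm]

lemma prob_comp_fst [Nonempty B] (P : A → Prop) : prob (fun x : A × B => P x.1) = prob P := by
  have hB : (Fintype.card B : ℝ) ≠ 0 := by positivity
  have hconst : ∀ a, prob (fun _ : B => P a) = if P a then 1 else 0 := fun a => by
    by_cases h : P a <;> simp [prob, h, hB]
  rw [prob_prod_eq_sum (fun a _ => P a)]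
  simp_rw [hconst]
  rw [prob, Finset.natCast_card_filter]

lemma prob_comp_snd [Nonempty A] (P : B → Prop) : prob (fun x : A × B => P x.2) = prob P :=
  (prob_comp_equiv (Equiv.prodComm A B) fun y => P y.1).trans (prob_comp_fst P)

lemma prob_prod_le [Nonempty A] (T : A → Prop) (R : A → B → Prop) {r : ℝ}
    (hr : ∀ a, ¬ T a → prob (R a) ≤ r) :
    prob (fun y : A × B => R y.1 y.2) ≤ prob T + (1 - prob T) * r := by
  have hA : (Fintype.card A : ℝ) ≠ 0 := by positivity
  have hpt : ∀ a, prob (R a) ≤ (if T a then 1 else 0) + (1 - if T a then 1 else 0) * r := by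
    intro a
    split_ifs with h
    · simpa using prob_le_one (R a)
    · simpa using hr a h
  calc prob (fun y : A × B => R y.1 y.2)
      ≤ (∑ a, ((if T a then 1 else 0) + (1 - if T a then 1 else 0) * r)) / Fintype.card A := by
        rw [prob_prod_eq_sum]
        gcongr with a
        exact hpt a
    _ = prob T + (1 - prob T) * r := by
        rw [prob, Finset.natCast_card_filter]
        simp only [Finset.sum_add_distrib, ← Finset.sum_mul, Finset.sum_sub_distrib,
          Finset.sum_const, Finset.card_univ, nsmul_eq_mul, mul_one]
        field_simp

end Prob

section Marginals

variable {A B C D : Type*} [Fintype A] [Fintype B] [Fintype C] [Fintype D]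

lemma prob_comp_snd_fst [Nonempty A] [Nonempty C] (P : B → Prop) :
    prob (fun x : A × B × C => P x.2.1) = prob P :=
  (prob_comp_snd fun y : B × C => P y.1).trans (prob_comp_fst P)

lemma prob_comp_snd_snd_snd [Nonempty A] [Nonempty B] [Nonempty C] (P : D → Prop) :
    prob (fun x : A × B × C × D => P x.2.2.2) = prob P :=
  (prob_comp_snd fun y : B × C × D => P y.2.2).trans
    ((prob_comp_snd fun z : C × D => P z.2).trans (prob_comp_snd P))

lemma prob_comp_fst_snd_snd_fst [Nonempty B] [Nonempty D] (P : A × C → Prop) :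
    prob (fun x : A × B × C × D => P (x.1, x.2.2.1)) = prob P :=
  let e : A × B × C × D ≃ (A × C) × B × D :=
    ⟨fun x => ((x.1, x.2.2.1), x.2.1, x.2.2.2), fun y => (y.1.1, y.2.1, y.1.2, y.2.2),
      fun _ => rfl, fun _ => rfl⟩
  (prob_comp_equiv e fun y => P y.1).trans (prob_comp_fst P)

lemma prob_comp_snd_fst_add_fst [AddGroup A] [Nonempty C] (P : A → Prop) :
    prob (fun x : A × A × C => P (x.2.1 + x.1)) = prob P :=
  (prob_comp_equiv (Equiv.prodShear (Equiv.refl A) fun a => (Equiv.addRight a).prodCongr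
    (Equiv.refl C)) fun x => P x.2.1).trans (prob_comp_snd_fst P)

lemma prob_comp_snd_snd_snd_add [AddGroup D] [Nonempty A] [Nonempty B] [Nonempty C]
    (f : A → C → D) (P : D → Prop) :
    prob (fun x : A × B × C × D => P (x.2.2.2 + f x.1 x.2.2.1)) = prob P :=
  (prob_comp_equiv (Equiv.prodShear (Equiv.refl A) fun a => (Equiv.refl B).prodCongr <|
    Equiv.prodShear (Equiv.refl C) fun c => Equiv.addRight (f a c)) fun x => P x.2.2.2).trans
      (prob_comp_snd_snd_snd P)

end Marginals

lemma prob_map_eq_zero_of_surjective {G H : Type*} [AddGroup G] [AddGroup H] [Fintype G]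
    [Fintype H] (f : G →+ H) (hf : Function.Surjective f) :
    prob (fun x => f x = 0) = (Fintype.card H : ℝ)⁻¹ := by
  have hcard := f.ker.card_mul_index
  rw [AddSubgroup.index_ker, AddMonoidHom.range_eq_top.2 hf, AddSubgroup.card_top] at hcard
  have hker : (Finset.univ.filter fun x => f x = 0).card = Nat.card f.ker := by
    rw [Nat.card_eq_fintype_card, Fintype.card_subtype]
    simp [AddMonoidHom.mem_ker]
  have hker0 : (Nat.card f.ker : ℝ) ≠ 0 := Nat.cast_ne_zero.2 Nat.card_pos.ne'
  unfold prob
  rw [hker, Fintype.card_eq_nat_card, Fintype.card_eq_nat_card, ← hcard]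
  push_cast
  field_simp

lemma prob_dotProduct_eq_zero {F ι : Type*} [Field F] [Fintype F] [Fintype ι] [DecidableEq ι]
    {a : ι → F} (ha : a ≠ 0) :
    prob (fun x : ι → F => x ⬝ᵥ a = 0) = (Fintype.card F : ℝ)⁻¹ := by
  obtain ⟨i, hi⟩ := Function.ne_iff.1 ha
  refine prob_map_eq_zero_of_surjective (AddMonoidHom.mk' (· ⬝ᵥ a) fun x y => add_dotProduct x y a)
    fun t => ⟨Pi.single i (t / a i), ?_⟩
  simpa [single_dotProduct] using div_mul_cancel₀ t hi

section PWH

variable {R ι κ : Type*} [CommRing R] [Fintype ι] [Fintype κ] {d : ℕ}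

lemma PWH_add (σ : ι → Fin d → R) (x y : ι → R) : PWH σ (x + y) = PWH σ x + PWH σ y := by
  funext j
  simp [PWH, add_mul, Finset.sum_add_distrib]

lemma PWH_outer_sub_mulVec (M : κ → Matrix (Fin d) (Fin d) R) (σ : ι → Fin d → R)
    (σ2 : ι × κ → Fin d → R) (l : ι → R) (μ : κ → R) :
    PWH σ2 (fun pe => l pe.1 * μ pe.2) - (∑ e, μ e • M e) *ᵥ PWH σ l
      = PWH (fun pe => σ2 pe - M pe.2 *ᵥ σ pe.1) (fun pe => l pe.1 * μ pe.2) := by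
  funext j
  simp only [Pi.sub_apply, PWH, Fintype.sum_prod_type, mulVec, dotProduct, Matrix.sum_apply,
    Matrix.smul_apply, smul_eq_mul, Finset.mul_sum, Finset.sum_mul, mul_sub, Finset.sum_sub_distrib,
    sub_right_inj]
  rw [Finset.sum_comm]
  refine Finset.sum_congr rfl fun p _ => ?_
  rw [Finset.sum_comm]
  exact Finset.sum_congr rfl fun e _ => Finset.sum_congr rfl fun i _ => by ring

lemma PWH_outer_eq_zero_of_decoded {M : κ → Matrix (Fin d) (Fin d) R} {σ : ι → Fin d → R}
    {σ2 : ι × κ → Fin d → R} {π1 : (ι → R) → Fin d → R} {π2 : (ι × κ → R) → Fin d → R}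
    {l a : ι → R} {μ : κ → R} {b : ι × κ → R}
    (hpass : π2 (b + fun pe => l pe.1 * μ pe.2) - π2 b = (∑ e, μ e • M e) *ᵥ (π1 (a + l) - π1 a))
    (ha : π1 a = PWH σ a) (hal : π1 (a + l) = PWH σ (a + l)) (hb : π2 b = PWH σ2 b)
    (hbγ : π2 (b + fun pe => l pe.1 * μ pe.2) = PWH σ2 (b + fun pe => l pe.1 * μ pe.2)) :
    PWH (fun pe => σ2 pe - M pe.2 *ᵥ σ pe.1) (fun pe => l pe.1 * μ pe.2) = 0 := by
  rw [ha, hal, hb, hbγ, PWH_add, PWH_add, add_sub_cancel_left, add_sub_cancel_left] at hpass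
  rw [← PWH_outer_sub_mulVec, hpass, sub_self]

end PWH

lemma prob_PWH_outer_eq_zero_le {F ι κ : Type*} [Field F] [Fintype F] [Fintype ι] [Fintype κ]
    [DecidableEq ι] [DecidableEq κ] {d : ℕ} {c : ι × κ → Fin d → F} (hc : c ≠ 0) :
    prob (fun y : (ι → F) × (κ → F) => PWH c (fun pe => y.1 pe.1 * y.2 pe.2) = 0) ≤ 3 / 4 := by
  obtain ⟨⟨p0, e0⟩, hpe⟩ := Function.ne_iff.1 hc
  obtain ⟨j0, hj0⟩ := Function.ne_iff.1 hpe
  -- In coordinate `j0` the event reads `μ ⬝ᵥ w λ = 0`; `w λ = 0` forces the nontrivial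
  -- linear condition `w λ e0 = 0`.
  set w : (ι → F) → κ → F := fun l e => l ⬝ᵥ fun p => c (p, e) j0
  have hw : ∀ y : (ι → F) × (κ → F),
      PWH c (fun pe => y.1 pe.1 * y.2 pe.2) = 0 → y.2 ⬝ᵥ w y.1 = 0 := by
    intro y h
    have := congrFun h j0
    simp only [PWH, Fintype.sum_prod_type_right] at this
    simpa [w, dotProduct, Finset.mul_sum, mul_comm, mul_left_comm, mul_assoc] using this
  set t := (Fintype.card F : ℝ)⁻¹
  have ht : t ≤ 1 / 2 := by
    rw [one_div]
    exact inv_anti₀ two_pos (by exact_mod_cast Fintype.one_lt_card)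
  have hs : prob (fun l => w l = 0) ≤ t :=
    (prob_mono fun l hl => congrFun hl e0).trans_eq
      (prob_dotProduct_eq_zero (Function.ne_iff.2 ⟨p0, hj0⟩))
  calc _ ≤ prob (fun y : (ι → F) × (κ → F) => y.2 ⬝ᵥ w y.1 = 0) := prob_mono hw
    _ ≤ prob (fun l => w l = 0) + (1 - prob (fun l => w l = 0)) * t :=
        prob_prod_le _ (fun l μ => μ ⬝ᵥ w l = 0) fun l hl => (prob_dotProduct_eq_zero hl).le
    _ ≤ 3 / 4 := by nlinarith [prob_nonneg (fun l => w l = 0)]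

lemma prob_matrixTest_le {F ι κ : Type*} [Field F] [Fintype F] [Fintype ι] [Fintype κ]
    [DecidableEq ι] [DecidableEq κ] {d : ℕ}
    (π1 : (ι → F) → (Fin d → F)) (π2 : (ι × κ → F) → (Fin d → F))
    (M : κ → Matrix (Fin d) (Fin d) F) (σ : ι → Fin d → F) (σ2 : ι × κ → Fin d → F)
    (hc : (fun pe : ι × κ => σ2 pe - M pe.2 *ᵥ σ pe.1) ≠ 0) :
    prob (fun x : (ι → F) × (ι → F) × (κ → F) × (ι × κ → F) =>
        π2 (x.2.2.2 + fun pe : ι × κ => x.1 pe.1 * x.2.2.1 pe.2) - π2 x.2.2.2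
          = (∑ e : κ, x.2.2.1 e • M e).mulVec (π1 (x.2.1 + x.1) - π1 x.2.1))
      ≤ 3 / 4 + 2 * rdist π1 (PWH σ) + 2 * rdist π2 (PWH σ2) := by
  have hZ := (prob_comp_fst_snd_snd_fst (B := ι → F) (D := ι × κ → F)
    fun y : (ι → F) × (κ → F) => PWH (fun pe : ι × κ => σ2 pe - M pe.2 *ᵥ σ pe.1)
      (fun pe => y.1 pe.1 * y.2 pe.2) = 0).trans_le (prob_PWH_outer_eq_zero_le hc)
  have ha := prob_comp_snd_fst (A := ι → F) (C := (κ → F) × (ι × κ → F))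
    fun a => π1 a ≠ PWH σ a
  have hal := prob_comp_snd_fst_add_fst (C := (κ → F) × (ι × κ → F)) fun a => π1 a ≠ PWH σ a
  have hb := prob_comp_snd_snd_snd (A := ι → F) (B := ι → F) (C := κ → F)
    fun b => π2 b ≠ PWH σ2 b
  have hbγ := prob_comp_snd_snd_snd_add (B := ι → F)
    (fun (l : ι → F) (μ : κ → F) (pe : ι × κ) => l pe.1 * μ pe.2) fun b => π2 b ≠ PWH σ2 b
  have hunion := prob_or_le.trans (add_le_add hZ (prob_or_le.trans (add_le_add ha.le
    (prob_or_le.trans (add_le_add hal.le (prob_or_le.trans (add_le_add hb.le hbγ.le)))))))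
  refine (prob_mono fun x hx => or_iff_not_imp_right.2 fun h => ?_).trans
    (hunion.trans_eq (by rw [rdist, rdist]; ring))
  simp only [not_or, not_not] at h
  exact PWH_outer_eq_zero_of_decoded hx h.1 h.2.1 h.2.2.1 h.2.2.2

theorem linear_pcpp_matrix_test_general {F : Type*} [Field F] [Fintype F]
    {k m d : ℕ}
    (M : Fin m → Matrix (Fin d) (Fin d) F)
    {ε : ℝ} (hε1 : ε < 1 / 400)
    (π1 : (Fin k → F) → (Fin d → F)) (π2 : (Fin k × Fin m → F) → (Fin d → F))
    (hp3 :
      prob (fun x : (Fin k → F) × (Fin k → F) × (Fin m → F) × (Fin k × Fin m → F) =>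
          π2 (x.2.2.2 + fun pe : Fin k × Fin m => x.1 pe.1 * x.2.2.1 pe.2) - π2 x.2.2.2
            = (∑ e : Fin m, x.2.2.1 e • M e).mulVec (π1 (x.2.1 + x.1) - π1 x.2.1))
        ≥ 1 - 4 * ε)
    (σ : Fin k → Fin d → F) (σ2 : Fin k × Fin m → Fin d → F)
    (h1 : rdist π1 (PWH σ) ≤ 24 * ε) (h2 : rdist π2 (PWH σ2) ≤ 24 * ε) :
    ∀ (p : Fin k) (e : Fin m), σ2 (p, e) = (M e).mulVec (σ p) := by
  intro p e
  by_contra hne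
  have hc : (fun pe : Fin k × Fin m => σ2 pe - M pe.2 *ᵥ σ pe.1) ≠ 0 :=
    fun h => hne (sub_eq_zero.1 (congrFun h (p, e)))
  linarith [prob_matrixTest_le π1 π2 M σ σ2 hc]

/-- **Matrix-test soundness** (inside the proof of Lemma 6.3).
For a vector-valued CSP instance with only linear constraints and
`ε ∈ (0, 1/400)`: if the matrix test passes with probability `p3 ≥ 1 - 4ε`,
and `π1, π2` are `24ε`-close to `PWH σ` and `PWH σ2` respectively, then
`σ2 (p, e) = M e · σ p` for all `p` and `e`. -/
theorem linear_pcpp_matrix_test {F : Type*} [Field F] [Fintype F] [CharP F 2]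
    {k m d : ℕ} (hk : 1 ≤ k) (hm : 1 ≤ m) (hd : 1 ≤ d)
    (u v : Fin m → Fin k) (M : Fin m → Matrix (Fin d) (Fin d) F)
    {ε : ℝ} (hε0 : 0 < ε) (hε1 : ε < 1 / 400)
    (π1 : (Fin k → F) → (Fin d → F)) (π2 : (Fin k × Fin m → F) → (Fin d → F))
    (hp3 :
      prob (fun x : (Fin k → F) × (Fin k → F) × (Fin m → F) × (Fin k × Fin m → F) =>
          π2 (x.2.2.2 + fun pe : Fin k × Fin m => x.1 pe.1 * x.2.2.1 pe.2) - π2 x.2.2.2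
            = (∑ e : Fin m, x.2.2.1 e • M e).mulVec (π1 (x.2.1 + x.1) - π1 x.2.1))
        ≥ 1 - 4 * ε)
    (σ : Fin k → Fin d → F) (σ2 : Fin k × Fin m → Fin d → F)
    (h1 : rdist π1 (PWH σ) ≤ 24 * ε) (h2 : rdist π2 (PWH σ2) ≤ 24 * ε) :
    ∀ (p : Fin k) (e : Fin m), σ2 (p, e) = (M e).mulVec (σ p) :=
  linear_pcpp_matrix_test_general M hε1 π1 π2 hp3 σ σ2 h1 h2
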